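/- arXiv:1512.02686 — 2 statements merged into one kernel-verified Lean document; each statement's English description precedes it below -/
import Mathlib

section
/- For every continuously differentiable function v : ℝ → ℝ such that v and v' are square integrable on ℝ and v(x) → 0 as x → ±∞, one has ∫_ℝ |v(x)|³ dx ≤ ‖v‖_{L²(ℝ)}^{5/2} ‖v'‖_{L²(ℝ)}^{1/2}. -/
/-!
Since `(v²)' = 2 v v'` is integrable and `v²` vanishes at `±∞`, integrating from either end gives
`2 v(x)² ≤ ∫ |(v²)'|`, so `‖v‖_∞² ≤ ∫ |v v'| ≤ ‖v‖₂ ‖v'‖₂` by Cauchy–Schwarz.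
Then `∫ |v|³ ≤ ‖v‖_∞ ∫ v² ≤ ‖v‖₂^{1/2} ‖v'‖₂^{1/2} ‖v‖₂²`.
-/

open MeasureTheory Filter Set

theorem two_mul_norm_le_integral_norm_of_hasDerivAt_of_tendsto
    {E : Type*} [NormedAddCommGroup E] [NormedSpace ℝ E] [CompleteSpace E]
    {f f' : ℝ → E} (hderiv : ∀ x, HasDerivAt f (f' x) x) (hf' : Integrable f')
    (hbot : Tendsto f atBot (nhds 0)) (htop : Tendsto f atTop (nhds 0)) (x : ℝ) :
    2 * ‖f x‖ ≤ ∫ t, ‖f' t‖ := by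
  have hleft : ∫ t in Iic x, f' t = f x := by
    simpa using integral_Iic_of_hasDerivAt_of_tendsto' (fun t _ => hderiv t) hf'.integrableOn hbot
  have hright : ∫ t in Ioi x, f' t = -f x := by
    simpa using integral_Ioi_of_hasDerivAt_of_tendsto' (fun t _ => hderiv t) hf'.integrableOn htop
  calc 2 * ‖f x‖ = ‖∫ t in Iic x, f' t‖ + ‖∫ t in Ioi x, f' t‖ := by
        rw [hleft, hright, norm_neg]; ring
    _ ≤ (∫ t in Iic x, ‖f' t‖) + ∫ t in Ioi x, ‖f' t‖ :=
        add_le_add (norm_integral_le_integral_norm _) (norm_integral_le_integral_norm _)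
    _ = ∫ t, ‖f' t‖ :=
        intervalIntegral.integral_Iic_add_Ioi hf'.norm.integrableOn hf'.norm.integrableOn

theorem sq_le_integral_abs_mul_of_hasDerivAt_of_tendsto
    {v v' : ℝ → ℝ} (hderiv : ∀ x, HasDerivAt v (v' x) x) (hint : Integrable (fun t => v t * v' t))
    (hbot : Tendsto v atBot (nhds 0)) (htop : Tendsto v atTop (nhds 0)) (x : ℝ) :
    v x ^ 2 ≤ ∫ t, |v t * v' t| := by
  have hsq (t : ℝ) : HasDerivAt (fun s => v s ^ 2) (2 * (v t * v' t)) t := by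
    simpa [mul_assoc] using (hderiv t).fun_pow 2
  have htwice := two_mul_norm_le_integral_norm_of_hasDerivAt_of_tendsto hsq (hint.const_mul 2)
    (by simpa using hbot.pow 2) (by simpa using htop.pow 2) x
  simp only [Real.norm_eq_abs, abs_mul, abs_two, abs_pow, sq_abs, integral_const_mul] at htwice
  simpa [abs_mul] using htwice

section

variable {α : Type*} [MeasurableSpace α] {μ : Measure α}

theorem integral_abs_mul_le_sqrt_mul_sqrt {f g : α → ℝ} (hf : MemLp f 2 μ) (hg : MemLp g 2 μ) :
    ∫ a, |f a * g a| ∂μ ≤ Real.sqrt (∫ a, f a ^ 2 ∂μ) * Real.sqrt (∫ a, g a ^ 2 ∂μ) := by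
  have hpq : (2 : ℝ).HolderConjugate 2 := by constructor <;> norm_num
  have h := integral_mul_norm_le_Lp_mul_Lq hpq (by simpa using hf) (by simpa using hg)
  simp only [Real.norm_eq_abs, Real.rpow_two, sq_abs] at h
  simpa [abs_mul, Real.sqrt_eq_rpow] using h

theorem integral_abs_pow_three_le_sqrt_mul_integral_sq {v : α → ℝ} {M : ℝ}
    (hv : Integrable (fun a => v a ^ 2) μ) (hM : ∀ a, v a ^ 2 ≤ M) :
    ∫ a, |v a| ^ 3 ∂μ ≤ Real.sqrt M * ∫ a, v a ^ 2 ∂μ := by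
  rw [← integral_const_mul]
  refine integral_mono_of_nonneg (Eventually.of_forall fun a => by positivity)
    (hv.const_mul _) (Eventually.of_forall fun a => ?_)
  have habs : |v a| ≤ Real.sqrt M := Real.abs_le_sqrt (hM a)
  calc |v a| ^ 3 = |v a| * v a ^ 2 := by rw [← sq_abs (v a)]; ring
    _ ≤ Real.sqrt M * v a ^ 2 := by gcongr

end

theorem sqrt_mul_sq_le_rpow_mul_rpow {a b I : ℝ} (ha : 0 ≤ a) (hI : I ≤ a * b) :
    Real.sqrt I * a ^ 2 ≤ a ^ ((5 : ℝ) / 2) * b ^ ((1 : ℝ) / 2) := by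
  calc Real.sqrt I * a ^ 2 ≤ Real.sqrt (a * b) * a ^ 2 := by gcongr
    _ = a ^ ((1 : ℝ) / 2 + 2) * b ^ ((1 : ℝ) / 2) := by
        rw [Real.sqrt_mul ha, Real.sqrt_eq_rpow, Real.sqrt_eq_rpow,
          Real.rpow_add' ha (by norm_num), Real.rpow_two]
        ring
    _ = a ^ ((5 : ℝ) / 2) * b ^ ((1 : ℝ) / 2) := by norm_num

/-- Cubic interpolation estimate: ∫ |v|³ ≤ ‖v‖₂^{5/2} ‖v'‖₂^{1/2}. -/
theorem integral_abs_cube_le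
    (v : ℝ → ℝ) (hv : ContDiff ℝ 1 v)
    (hv2 : Integrable (fun x => (v x) ^ 2))
    (hv'2 : Integrable (fun x => (deriv v x) ^ 2))
    (htop : Tendsto v atTop (nhds 0)) (hbot : Tendsto v atBot (nhds 0)) :
    ∫ x, |v x| ^ 3 ≤
      (Real.sqrt (∫ x, (v x) ^ 2)) ^ ((5 : ℝ) / 2) *
        (Real.sqrt (∫ x, (deriv v x) ^ 2)) ^ ((1 : ℝ) / 2) := by
  have hv_mem : MemLp v 2 := (memLp_two_iff_integrable_sq hv.continuous.aestronglyMeasurable).2 hv2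
  have hv'_mem : MemLp (deriv v) 2 :=
    (memLp_two_iff_integrable_sq (hv.continuous_deriv le_rfl).aestronglyMeasurable).2 hv'2
  have hsup : ∀ x, v x ^ 2 ≤ ∫ t, |v t * deriv v t| :=
    sq_le_integral_abs_mul_of_hasDerivAt_of_tendsto
      (fun x => (hv.differentiable one_ne_zero x).hasDerivAt) (hv_mem.integrable_mul hv'_mem)
      hbot htop
  have hv_sq : ∫ x, v x ^ 2 = Real.sqrt (∫ x, v x ^ 2) ^ 2 :=
    (Real.sq_sqrt (integral_nonneg fun x => sq_nonneg _)).symm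
  calc ∫ x, |v x| ^ 3 ≤ Real.sqrt (∫ t, |v t * deriv v t|) * ∫ x, v x ^ 2 :=
        integral_abs_pow_three_le_sqrt_mul_integral_sq hv2 hsup
    _ ≤ _ := by
        have h := sqrt_mul_sq_le_rpow_mul_rpow (Real.sqrt_nonneg _)
          (integral_abs_mul_le_sqrt_mul_sqrt hv_mem hv'_mem)
        rwa [← hv_sq] at h
end

section
/- Let (wᵢ)_{i ∈ ℕ} be a sequence of continuously differentiable functions ℝ → ℝ such that each wᵢ and wᵢ' is square integrable on ℝ and wᵢ(x) → 0 as x → ±∞, and let u : ℝ → ℝ be square integrable. Then Σ_{i ∈ ℕ} ( ∫_ℝ u(x)² wᵢ(x) dx )² ≤ ‖u‖_{L²(ℝ)}⁴ · Σ_{i ∈ ℕ} ‖wᵢ‖_{L²(ℝ)} ‖wᵢ'‖_{L²(ℝ)}. -/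
open MeasureTheory Filter

/-! For `g` vanishing at `±∞`, `g a ^ 2 = ∫_{-∞}^a (g²)' = -∫_a^∞ (g²)'`, so
`2 g(a)² ≤ ∫ |(g²)'| = 2 ∫ |g g'| ≤ 2 ‖g‖₂ ‖g'‖₂` by Cauchy–Schwarz (Agmon's inequality).
Hence `|∫ u² wᵢ| ≤ ‖wᵢ‖_∞ ‖u‖₂² ≤ (‖wᵢ‖₂ ‖wᵢ'‖₂)^{1/2} ‖u‖₂²`; square and sum over `i`. -/

theorem integral_abs_mul_abs_le_sqrt_mul_sqrt {α : Type*} [MeasurableSpace α] {μ : Measure α}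
    {f g : α → ℝ} (hf : MemLp f 2 μ) (hg : MemLp g 2 μ) :
    ∫ a, |f a| * |g a| ∂μ ≤ √(∫ a, f a ^ 2 ∂μ) * √(∫ a, g a ^ 2 ∂μ) := by
  have h := integral_mul_norm_le_Lp_mul_Lq Real.HolderConjugate.two_two
    (by simpa using hf) (by simpa using hg)
  simpa only [Real.norm_eq_abs, Real.rpow_two, sq_abs, Real.sqrt_eq_rpow] using h

theorem sq_le_integral_abs_mul_abs_deriv {g : ℝ → ℝ} (hg : Differentiable ℝ g)
    (hgg' : Integrable (fun x => g x * deriv g x))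
    (htop : Tendsto g atTop (nhds 0)) (hbot : Tendsto g atBot (nhds 0)) (a : ℝ) :
    g a ^ 2 ≤ ∫ x, |g x| * |deriv g x| := by
  set h := fun x => 2 * (g x * deriv g x)
  have hh : Integrable h := hgg'.const_mul 2
  have hderiv : ∀ x, HasDerivAt (fun y => g y ^ 2) (h x) x := fun x => by
    simpa [h, mul_assoc] using (hg x).hasDerivAt.fun_pow 2
  have hleft : ∫ x in Set.Iic a, h x = g a ^ 2 := by
    rw [integral_Iic_of_hasDerivAt_of_tendsto' (fun x _ => hderiv x) hh.integrableOn
      (by simpa using hbot.pow 2), sub_zero]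
  have hright : ∫ x in Set.Ioi a, h x = -g a ^ 2 := by
    rw [integral_Ioi_of_hasDerivAt_of_tendsto' (fun x _ => hderiv x) hh.integrableOn
      (by simpa using htop.pow 2), zero_sub]
  have hsplit : (∫ x in Set.Iic a, |h x|) + ∫ x in Set.Ioi a, |h x| = ∫ x, |h x| :=
    intervalIntegral.integral_Iic_add_Ioi hh.abs.integrableOn hh.abs.integrableOn
  have hIic := norm_integral_le_integral_norm (μ := volume.restrict (Set.Iic a)) h
  have hIoi := norm_integral_le_integral_norm (μ := volume.restrict (Set.Ioi a)) h
  simp only [Real.norm_eq_abs, hleft, hright, abs_neg, abs_sq] at hIic hIoi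
  have htotal : ∫ x, |h x| = 2 * ∫ x, |g x| * |deriv g x| := by
    simp only [h, abs_mul, abs_two, integral_const_mul]
  linarith

theorem sq_le_sqrt_integral_sq_mul_sqrt_integral_deriv_sq {g : ℝ → ℝ} (hg : Differentiable ℝ g)
    (hg2 : Integrable (fun x => g x ^ 2)) (hg'2 : Integrable (fun x => deriv g x ^ 2))
    (htop : Tendsto g atTop (nhds 0)) (hbot : Tendsto g atBot (nhds 0)) (a : ℝ) :
    g a ^ 2 ≤ √(∫ x, g x ^ 2) * √(∫ x, deriv g x ^ 2) := by
  have hgL2 : MemLp g 2 := (memLp_two_iff_integrable_sq hg.continuous.aestronglyMeasurable).2 hg2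
  have hg'L2 : MemLp (deriv g) 2 :=
    (memLp_two_iff_integrable_sq (stronglyMeasurable_deriv g).aestronglyMeasurable).2 hg'2
  calc g a ^ 2 ≤ ∫ x, |g x| * |deriv g x| :=
        sq_le_integral_abs_mul_abs_deriv hg (hgL2.integrable_mul hg'L2) htop hbot a
    _ ≤ _ := integral_abs_mul_abs_le_sqrt_mul_sqrt hgL2 hg'L2

theorem abs_integral_mul_le_of_abs_le {α : Type*} [MeasurableSpace α] {μ : Measure α}
    {f w : α → ℝ} {M : ℝ} (hf : Integrable f μ) (hw : ∀ x, |w x| ≤ M) :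
    |∫ x, f x * w x ∂μ| ≤ (∫ x, |f x| ∂μ) * M := by
  rw [← Real.norm_eq_abs]
  refine (norm_integral_le_of_norm_le (hf.abs.mul_const M) (.of_forall fun x => ?_)).trans_eq
    (integral_mul_const M _)
  rw [Real.norm_eq_abs, abs_mul]
  exact mul_le_mul_of_nonneg_left (hw x) (abs_nonneg _)

/-- Bound on the quadratic variation of the stochastic integral (u², Φ dW):
    Σᵢ (∫ u² wᵢ)² ≤ ‖u‖₂⁴ Σᵢ ‖wᵢ‖₂ ‖wᵢ'‖₂, with both sums taken in [0,∞]. -/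
theorem quadratic_variation_bound
    (w : ℕ → ℝ → ℝ)
    (hw : ∀ i, ContDiff ℝ 1 (w i))
    (hw2 : ∀ i, Integrable (fun x => (w i x) ^ 2))
    (hw'2 : ∀ i, Integrable (fun x => (deriv (w i) x) ^ 2))
    (htop : ∀ i, Tendsto (w i) atTop (nhds 0))
    (hbot : ∀ i, Tendsto (w i) atBot (nhds 0))
    (u : ℝ → ℝ) (hu2 : Integrable (fun x => (u x) ^ 2)) :
    ∑' i : ℕ, ENNReal.ofReal ((∫ x, (u x) ^ 2 * w i x) ^ 2)
      ≤ ENNReal.ofReal ((Real.sqrt (∫ x, (u x) ^ 2)) ^ 4) *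
          ∑' i : ℕ, ENNReal.ofReal
            (Real.sqrt (∫ x, (w i x) ^ 2) * Real.sqrt (∫ x, (deriv (w i) x) ^ 2)) := by
  rw [← ENNReal.tsum_mul_left]
  refine ENNReal.tsum_le_tsum fun i => ?_
  set C := √(∫ x, w i x ^ 2) * √(∫ x, deriv (w i) x ^ 2)
  have hC : 0 ≤ C := by positivity
  have hwC : ∀ x, |w i x| ≤ √C := fun x => Real.abs_le_sqrt <|
    sq_le_sqrt_integral_sq_mul_sqrt_integral_deriv_sq ((hw i).differentiable one_ne_zero)
      (hw2 i) (hw'2 i) (htop i) (hbot i) x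
  have hbound := abs_integral_mul_le_of_abs_le hu2 hwC
  simp only [abs_sq] at hbound
  rw [← ENNReal.ofReal_mul (by positivity)]
  refine ENNReal.ofReal_le_ofReal ?_
  calc (∫ x, u x ^ 2 * w i x) ^ 2 ≤ ((∫ x, u x ^ 2) * √C) ^ 2 := by
        simpa only [sq_abs] using pow_le_pow_left₀ (abs_nonneg _) hbound 2
    _ = √(∫ x, u x ^ 2) ^ 4 * C := by
        rw [mul_pow, Real.sq_sqrt hC, show 4 = 2 * 2 from rfl, pow_mul,
          Real.sq_sqrt (integral_nonneg fun x => sq_nonneg (u x))]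
end
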